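/- Let 𝒜 = ⟨Q, A, δ⟩ be an automaton with an independent set W with range R, and let K be a reducible subset of R of maximal cardinality among reducible subsets of R. Then there is no stable pair (p, q) with p ∈ K and q ∈ R \ K. -/

import Mathlib

/-- The extension of a transition function `δ : Q → A → Q` to words. -/
def run {Q A : Type*} (δ : Q → A → Q) (q : Q) (u : List A) : Q := u.foldl δ q

/-- `W` is an independent set of words with range `R`. -/
def IsIndependent {Q A : Type*} [DecidableEq Q] (δ : Q → A → Q)
    (W : Finset (List A)) (R : Finset Q) : Prop :=
  W.card = R.card ∧ ∀ s : Q, W.image (fun w => run δ s w) = R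

/-- A set of states `K` is reducible if some word maps it to a singleton. -/
def Reducible {Q A : Type*} [DecidableEq Q] (δ : Q → A → Q) (K : Finset Q) : Prop :=
  ∃ (v : List A) (q : Q), K.image (fun p => run δ p v) = {q}

/-- The pair `(p, q)` is stable if, for every word `u`, the set `{δ(p,u), δ(q,u)}`
is reducible, i.e. some word `v` takes `δ(p,u)` and `δ(q,u)` to the same state. -/
def StablePair {Q A : Type*} (δ : Q → A → Q) (p q : Q) : Prop :=
  ∀ u : List A, ∃ v : List A, run δ (run δ p u) v = run δ (run δ q u) v


/-
A word `v` collapsing `K` to a state `c`, followed by a word `v'` that synchronises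
`δ(p, v) = c` with `δ(q, v)` (which exists because `(p, q)` is stable), collapses `K ∪ {q}`.
So a stable pair leaving `K` would produce a strictly larger reducible subset of `R`.
-/

section Automaton

variable {Q A : Type*} (δ : Q → A → Q)

theorem run_append (q : Q) (u v : List A) : run δ q (u ++ v) = run δ (run δ q u) v :=
  List.foldl_append

variable [DecidableEq Q] {δ} {K : Finset Q}

theorem reducible_iff_exists_forall_run_eq (hK : K.Nonempty) :
    Reducible δ K ↔ ∃ (v : List A) (c : Q), ∀ k ∈ K, run δ k v = c := by
  refine exists_congr fun v => exists_congr fun c => ⟨fun h k hk => ?_, fun h => ?_⟩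
  · exact Finset.mem_singleton.mp (h ▸ Finset.mem_image_of_mem _ hk)
  · exact (Finset.image_congr h).trans (Finset.image_const hK c)

theorem Reducible.insert_of_stablePair (hK : Reducible δ K) {p q : Q} (hp : p ∈ K)
    (hpq : StablePair δ p q) : Reducible δ (insert q K) := by
  obtain ⟨v, c, hvc⟩ := (reducible_iff_exists_forall_run_eq ⟨p, hp⟩).mp hK
  obtain ⟨v', hv'⟩ := hpq v
  refine (reducible_iff_exists_forall_run_eq (Finset.insert_nonempty q K)).mpr
    ⟨v ++ v', run δ c v', ?_⟩
  intro k hk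
  rw [run_append]
  rcases Finset.mem_insert.mp hk with rfl | hk
  · rw [← hv', hvc p hp]
  · rw [hvc k hk]

end Automaton

theorem stmt_7_general {Q A : Type*} [DecidableEq Q]
    (δ : Q → A → Q) (R : Finset Q)
    (K : Finset Q) (hKR : K ⊆ R) (hKred : Reducible δ K)
    (hKmax : ∀ K' ⊆ R, Reducible δ K' → K'.card ≤ K.card) :
    ∀ p ∈ K, ∀ q ∈ R \ K, ¬ StablePair δ p q := by
  intro p hp q hq hpq
  obtain ⟨hqR, hqK⟩ := Finset.mem_sdiff.mp hq
  have hcard := hKmax (insert q K) (Finset.insert_subset hqR hKR)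
    (hKred.insert_of_stablePair hp hpq)
  rw [Finset.card_insert_of_notMem hqK] at hcard
  omega

/-- If `K` is a reducible subset of `R` of maximal cardinality among the reducible
subsets of `R`, then there is no stable pair in `K × (R \ K)`. -/
theorem stmt_7 {Q A : Type*} [Fintype Q] [DecidableEq Q] [Fintype A]
    (δ : Q → A → Q) (W : Finset (List A)) (R : Finset Q)
    (hW : IsIndependent δ W R)
    (K : Finset Q) (hKR : K ⊆ R) (hKred : Reducible δ K)
    (hKmax : ∀ K' ⊆ R, Reducible δ K' → K'.card ≤ K.card) :
    ∀ p ∈ K, ∀ q ∈ R \ K, ¬ StablePair δ p q :=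
  stmt_7_general δ R K hKR hKred hKmax
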